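/- arXiv:1405.6462 — 5 statements merged into one kernel-verified Lean document; each statement's English description precedes it below -/
import Mathlib

section
/- If S is a subset of the symmetric group S_n that is closed under conjugation and does not contain the identity, then every eigenvalue of the Cayley graph Γ(S_n, S) is an integer. -/
/-!
Let `λ` be the representation of `G = Sₙ` on `G → ℂ` by left translation. The adjacency matrix
of `Γ(G, S)` is `A = ∑ s ∈ S, λ s⁻¹`, and since `S` is closed under conjugation, `A` commutes with
every `λ g`; so an eigenspace `V` of `A`, with eigenvalue `μ`, is a subrepresentation and
`μ · dim V = ∑ s ∈ S, χ_V s`. Let `ζ` be a primitive `|G|`-th root of unity. Each `λ s` has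
finite order, so `χ_V (s ^ k) = p_s (ζ ^ k)` for a polynomial `p_s` with rational coefficients.
In `Sₙ` every `σ ^ k` with `k` coprime to `n!` has the cycle type of `σ`, so `s ↦ s ^ k`
permutes `S`; hence `∑ s ∈ S, χ_V s ∈ ℚ(ζ)` is fixed by `Gal(ℚ(ζ)/ℚ)` and is rational.
Thus `μ` is rational, and as an eigenvalue of an integer matrix it is an algebraic integer,
hence an integer.
-/

open Polynomial IntermediateField Module

theorem Finset.sum_comp_of_injOn_of_mapsTo {α M : Type*} [AddCommMonoid M] {S : Finset α}
    {e : α → α} (he : Set.InjOn e S) (hS : ∀ a ∈ S, e a ∈ S) (f : α → M) :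
    ∑ a ∈ S, f (e a) = ∑ a ∈ S, f a :=
  Finset.sum_nbij e hS he (Finset.surjOn_of_injOn_of_card_le _ hS he le_rfl) fun _ _ => rfl

theorem Equiv.Perm.isConj_pow_of_coprime {α : Type*} [Fintype α] [DecidableEq α] (σ : Perm α)
    {k : ℕ} (hk : k.Coprime (orderOf σ)) : IsConj (σ ^ k) σ := by
  rw [isConj_iff_cycleType_eq]
  induction σ using cycle_induction_on with
  | base_one => simp
  | base_cycles c hc => rw [(hc.pow_iff.mpr hk).cycleType, hc.cycleType, support_pow_coprime hk]
  | induction_disjoint σ τ hd _ ihσ ihτ =>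
    rw [hd.orderOf] at hk
    rw [hd.commute.mul_pow, (hd.pow_disjoint_pow k k).cycleType_mul, hd.cycleType_mul,
      ihσ (hk.coprime_dvd_right (Nat.dvd_lcm_left _ _)),
      ihτ (hk.coprime_dvd_right (Nat.dvd_lcm_right _ _))]

theorem IsPrimitiveRoot.exists_rat_eq_aeval_of_forall_coprime {L : Type*} [Field L] [CharZero L]
    {ζ : L} {m : ℕ} [NeZero m] (hζ : IsPrimitiveRoot ζ m) (p : ℚ[X])
    (hp : ∀ k, k.Coprime m → aeval (ζ ^ k) p = aeval ζ p) :
    ∃ q : ℚ, aeval ζ p = q := by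
  have : IsCyclotomicExtension {m} ℚ ℚ⟮ζ⟯ := by
    change IsCyclotomicExtension {m} ℚ ℚ⟮ζ⟯.toSubalgebra
    rw [adjoin_simple_toSubalgebra_of_isAlgebraic
      (hζ.isIntegral (NeZero.pos m)).tower_top.isAlgebraic]
    exact hζ.adjoin_isCyclotomicExtension ℚ
  have := IsCyclotomicExtension.isGalois {m} ℚ ℚ⟮ζ⟯
  have := IsCyclotomicExtension.finiteDimensional {m} ℚ ℚ⟮ζ⟯
  let ζK : ℚ⟮ζ⟯ := ⟨ζ, mem_adjoin_simple_self ℚ ζ⟩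
  have hζK : IsPrimitiveRoot ζK m := hζ.of_map_of_injective (f := ℚ⟮ζ⟯.val) Subtype.val_injective
  have hval (x : ℚ⟮ζ⟯) : (aeval x p : L) = aeval (x : L) p := (aeval_algHom_apply ℚ⟮ζ⟯.val x p).symm
  have hfixed (σ : ℚ⟮ζ⟯ ≃ₐ[ℚ] ℚ⟮ζ⟯) : σ (aeval ζK p) = aeval ζK p := by
    have hσζ := hζK.map_of_injective σ.injective
    obtain ⟨k, -, hk⟩ := hζK.eq_pow_of_pow_eq_one hσζ.pow_eq_one
    have hcop : k.Coprime m := (hζK.pow_iff_coprime (NeZero.pos m) k).mp (hk ▸ hσζ)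
    apply Subtype.val_injective
    rw [← aeval_algHom_apply, ← hk, hval, hval]
    exact hp k hcop
  obtain ⟨q, hq⟩ := (IsGalois.mem_range_algebraMap_iff_fixed (aeval ζK p)).mpr hfixed
  exact ⟨q, by rw [show ζ = ((ζK : ℚ⟮ζ⟯) : L) from rfl, ← hval, ← hq]; rfl⟩

theorem Module.End.pow_eq_one_of_hasEigenvalue {K V : Type*} [Field K] [AddCommGroup V]
    [Module K V] {f : End K V} {m : ℕ} (hf : f ^ m = 1) {μ : K} (hμ : f.HasEigenvalue μ) :
    μ ^ m = 1 := by
  obtain ⟨v, hv⟩ := hμ.exists_hasEigenvector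
  have h : (μ ^ m - 1) • v = 0 := by
    rw [sub_smul, one_smul, ← hv.pow_apply m, hf, End.one_apply, sub_self]
  exact sub_eq_zero.mp ((smul_eq_zero.mp h).resolve_right hv.2)

theorem Module.End.exists_trace_pow_eq_aeval_of_pow_eq_one {K V : Type*} [Field K] [IsAlgClosed K]
    [CharZero K] [AddCommGroup V] [Module K V] [FiniteDimensional K V] {f : End K V} {m : ℕ}
    [NeZero m] (hf : f ^ m = 1) {ζ : K} (hζ : IsPrimitiveRoot ζ m) :
    ∃ p : ℚ[X], ∀ k : ℕ, LinearMap.trace K V (f ^ k) = aeval (ζ ^ k) p := by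
  let E (j : Fin m) : Submodule K V := f.eigenspace (ζ ^ (j : ℕ))
  have hsemi : f.IsSemisimple := by
    refine isSemisimple_of_squarefree_aeval_eq_zero (p := X ^ m - C 1)
      (separable_X_pow_sub_C 1 (NeZero.ne (m : K)) one_ne_zero).squarefree ?_
    simp [hf]
  have hE : DirectSum.IsInternal E := by
    refine DirectSum.isInternal_submodule_of_iSupIndep_of_iSup_eq_top
      (f.eigenspaces_iSupIndep.comp fun i j h => Fin.ext (hζ.pow_inj i.2 j.2 h)) ?_
    refine eq_top_iff.mpr (hsemi.iSup_eigenspace_eq_top ▸ iSup_le fun μ => ?_)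
    by_cases hμ : f.HasEigenvalue μ
    · obtain ⟨j, hj, rfl⟩ := hζ.eq_pow_of_pow_eq_one (pow_eq_one_of_hasEigenvalue hf hμ)
      exact le_iSup E ⟨j, hj⟩
    · rw [hasEigenvalue_iff, not_not] at hμ
      simp [hμ]
  refine ⟨∑ j : Fin m, (finrank K (E j) : ℚ) • X ^ (j : ℕ), fun k => ?_⟩
  have hmaps (j : Fin m) : Set.MapsTo (f ^ k) (E j) (E j) :=
    mapsTo_genEigenspace_of_comm ((Commute.refl f).pow_right k) _ 1
  rw [LinearMap.trace_eq_sum_trace_restrict hE hmaps]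
  simp only [map_sum, map_smul, map_pow, aeval_X]
  refine Finset.sum_congr rfl fun j _ => ?_
  have hrestrict : (f ^ k).restrict (hmaps j) = (ζ ^ (j : ℕ)) ^ k • 1 := by
    rw [← pow_restrict _ (mapsTo_genEigenspace_of_comm (Commute.refl f) _ 1), restrict_eigenspace,
      _root_.smul_pow, ← End.one_eq_id, one_pow]
  rw [hrestrict, map_smul, LinearMap.trace_one, smul_eq_mul, ← pow_mul, ← pow_mul, mul_comm,
    Rat.smul_def, Rat.cast_natCast, mul_comm k]

theorem Matrix.isIntegral_of_hasEigenvalue {n R K : Type*} [Fintype n] [DecidableEq n]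
    [CommRing R] [Field K] [Algebra R K] (A : Matrix n n R) {μ : K}
    (hμ : End.HasEigenvalue (toLin' (A.map (algebraMap R K))) μ) : IsIntegral R μ := by
  refine ⟨A.charpoly, A.charpoly_monic, ?_⟩
  rw [← aeval_def, ← eval_map_algebraMap, ← charpoly_map, ← charpoly_toLin']
  exact (End.hasEigenvalue_iff_isRoot_charpoly _ _).mp hμ

namespace Representation

variable {G W : Type*} [Group G] [AddCommGroup W] [Module ℂ W] (ρ : Representation ℂ G W)
  {S : Finset G}

theorem commute_sum_of_conj_mem (hS : ∀ g s, s ∈ S → g⁻¹ * s * g ∈ S) (g : G) :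
    Commute (ρ g) (∑ s ∈ S, ρ s) := by
  have hinj : Function.Injective fun s => g⁻¹ * s * g :=
    (mul_left_injective g).comp (mul_right_injective g⁻¹)
  rw [Commute, SemiconjBy, Finset.mul_sum, Finset.sum_mul,
    ← Finset.sum_comp_of_injOn_of_mapsTo hinj.injOn (hS g) (fun s => ρ g * ρ s)]
  simp only [← map_mul, mul_assoc, mul_inv_cancel_left]

def eigenSubrepresentation (hS : ∀ g s, s ∈ S → g⁻¹ * s * g ∈ S) (μ : ℂ) :
    Subrepresentation ρ where
  toSubmodule := End.eigenspace (∑ s ∈ S, ρ s) μ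
  apply_mem_toSubmodule g :=
    End.mapsTo_genEigenspace_of_comm (ρ.commute_sum_of_conj_mem hS g).symm μ 1

theorem sum_character_eigenSubrepresentation [FiniteDimensional ℂ W]
    (hS : ∀ g s, s ∈ S → g⁻¹ * s * g ∈ S) (μ : ℂ) :
    ∑ s ∈ S, (ρ.eigenSubrepresentation hS μ).toRepresentation.character s =
      μ * finrank ℂ (ρ.eigenSubrepresentation hS μ).toSubmodule := by
  have hsum : ∑ s ∈ S, (ρ.eigenSubrepresentation hS μ).toRepresentation s = μ • 1 := by
    ext x
    simpa [LinearMap.sum_apply, Subrepresentation.toRepresentation] using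
      End.mem_eigenspace_iff.mp x.2
  simp only [character, ← map_sum, hsum, map_smul, LinearMap.trace_one, smul_eq_mul]

theorem exists_rat_eq_of_hasEigenvalue_sum [Finite G] [FiniteDimensional ℂ W]
    (hconj : ∀ g s, s ∈ S → g⁻¹ * s * g ∈ S)
    (hpow : ∀ k, k.Coprime (Nat.card G) → ∀ s ∈ S, s ^ k ∈ S)
    {μ : ℂ} (hμ : End.HasEigenvalue (∑ s ∈ S, ρ s) μ) : ∃ q : ℚ, μ = q := by
  set V := ρ.eigenSubrepresentation hconj μ
  have : NeZero (Nat.card G) := ⟨Nat.card_pos.ne'⟩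
  obtain ⟨ζ, hζ⟩ : ∃ ζ : ℂ, IsPrimitiveRoot ζ (Nat.card G) :=
    ⟨_, Complex.isPrimitiveRoot_exp _ (NeZero.ne _)⟩
  have hχ (g : G) :
      ∃ p : ℚ[X], ∀ k, V.toRepresentation.character (g ^ k) = aeval (ζ ^ k) p := by
    simp only [character, map_pow]
    exact End.exists_trace_pow_eq_aeval_of_pow_eq_one
      (by rw [← map_pow, pow_card_eq_one', map_one]) hζ
  choose p hp using hχ
  have hp₁ (g : G) : V.toRepresentation.character g = aeval ζ (p g) := by simpa using hp g 1
  obtain ⟨q, hq⟩ := hζ.exists_rat_eq_aeval_of_forall_coprime (∑ s ∈ S, p s) fun k hk => by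
    simp only [map_sum, ← hp, ← hp₁]
    exact Finset.sum_comp_of_injOn_of_mapsTo (e := fun s => s ^ k)
      (powCoprime hk.symm).injective.injOn (hpow k hk) _
  have hd : (finrank ℂ V.toSubmodule : ℂ) ≠ 0 :=
    Nat.cast_ne_zero.mpr (Submodule.finrank_eq_zero.not.mpr hμ)
  refine ⟨q / finrank ℂ V.toSubmodule, ?_⟩
  rw [Rat.cast_div, Rat.cast_natCast, eq_div_iff hd, ← ρ.sum_character_eigenSubrepresentation,
    ← hq, map_sum]
  exact Finset.sum_congr rfl fun s _ => hp₁ s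

def leftTranslation (k G : Type*) [CommSemiring k] [Group G] : Representation k G (G → k) where
  toFun g := LinearMap.funLeft k k (g⁻¹ * ·)
  map_one' := by ext; simp
  map_mul' g h := by ext; simp [mul_assoc]

end Representation

section Cayley

variable {G : Type*} [Group G] [DecidableEq G]

def cayleyAdjMatrix (R : Type*) [Zero R] [One R] (S : Finset G) : Matrix G G R :=
  Matrix.of fun x y => if y * x⁻¹ ∈ S then 1 else 0

theorem cayleyAdjMatrix_map {R R' : Type*} [NonAssocSemiring R] [NonAssocSemiring R']
    (f : R →+* R') (S : Finset G) : (cayleyAdjMatrix R S).map f = cayleyAdjMatrix R' S := by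
  ext x y
  simp [cayleyAdjMatrix, apply_ite f]

theorem cayleyAdjMatrix_mulVec_apply [Fintype G] {R : Type*} [NonAssocSemiring R] (S : Finset G)
    (v : G → R) (x : G) : (cayleyAdjMatrix R S).mulVec v x = ∑ s ∈ S, v (s * x) := by
  simp only [Matrix.mulVec, dotProduct, cayleyAdjMatrix, Matrix.of_apply, ite_mul, one_mul,
    zero_mul]
  rw [← Equiv.sum_comp (Equiv.mulRight x)]
  simp only [Equiv.coe_mulRight, mul_inv_cancel_right, Finset.sum_ite_mem, Finset.univ_inter]

theorem toLin'_cayleyAdjMatrix [Fintype G] {R : Type*} [CommSemiring R] (S : Finset G) :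
    Matrix.toLin' (cayleyAdjMatrix R S) = ∑ s ∈ S, Representation.leftTranslation R G s⁻¹ := by
  refine LinearMap.ext fun v => funext fun x => ?_
  simp [Matrix.toLin'_apply, cayleyAdjMatrix_mulVec_apply, LinearMap.sum_apply,
    Representation.leftTranslation]

theorem exists_int_eq_of_hasEigenvalue_cayleyAdjMatrix [Fintype G] (S : Finset G)
    (hconj : ∀ g s, s ∈ S → g⁻¹ * s * g ∈ S)
    (hpow : ∀ k, k.Coprime (Nat.card G) → ∀ s ∈ S, s ^ k ∈ S) {μ : ℂ}
    (hμ : End.HasEigenvalue (Matrix.toLin' (cayleyAdjMatrix ℂ S)) μ) : ∃ z : ℤ, μ = z := by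
  have hinv : ∀ s ∈ S, s⁻¹ ∈ S := fun s hs => by
    have hcop : (Nat.card G - 1).Coprime (Nat.card G) :=
      (Nat.coprime_self_sub_left Nat.card_pos).mpr (Nat.coprime_one_left _)
    have hpow_inv : s ^ (Nat.card G - 1) = s⁻¹ := eq_inv_of_mul_eq_one_left <| by
      rw [← pow_succ, Nat.sub_add_cancel Nat.card_pos, pow_card_eq_one']
    exact hpow_inv ▸ hpow _ hcop s hs
  have hsum : ∑ s ∈ S, Representation.leftTranslation ℂ G s⁻¹ =
      ∑ s ∈ S, Representation.leftTranslation ℂ G s :=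
    Finset.sum_comp_of_injOn_of_mapsTo inv_injective.injOn hinv _
  obtain ⟨q, rfl⟩ := (Representation.leftTranslation ℂ G).exists_rat_eq_of_hasEigenvalue_sum
    hconj hpow (by rwa [toLin'_cayleyAdjMatrix, hsum] at hμ)
  have hint : IsIntegral ℤ (q : ℂ) :=
    (cayleyAdjMatrix ℤ S).isIntegral_of_hasEigenvalue (by rwa [cayleyAdjMatrix_map])
  obtain ⟨z, rfl⟩ := IsIntegrallyClosed.isIntegral_iff.mp
    ((isIntegral_algebraMap_iff (algebraMap ℚ ℂ).injective).mp hint)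
  exact ⟨z, by simp⟩

end Cayley

theorem stmt_6_general (n : ℕ) (S : Finset (Equiv.Perm (Fin n)))
    (hconj : ∀ g s : Equiv.Perm (Fin n), s ∈ S → g⁻¹ * s * g ∈ S)
    (μ : ℂ)
    (hμ : ∃ v : Equiv.Perm (Fin n) → ℂ, v ≠ 0 ∧
      (Matrix.of fun x y : Equiv.Perm (Fin n) =>
        if y * x⁻¹ ∈ S then (1 : ℂ) else 0).mulVec v = μ • v) :
    ∃ z : ℤ, μ = z := by
  obtain ⟨v, hv, hμv⟩ := hμ
  refine exists_int_eq_of_hasEigenvalue_cayleyAdjMatrix S hconj (fun k hk s hs => ?_)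
    (End.hasEigenvalue_of_hasEigenvector ⟨End.mem_eigenspace_iff.mpr hμv, hv⟩)
  obtain ⟨c, hc⟩ := isConj_iff.mp
    (s.isConj_pow_of_coprime (hk.coprime_dvd_right (orderOf_dvd_natCard s))).symm
  rw [← hc]
  simpa only [inv_inv] using hconj c⁻¹ s hs

theorem stmt_6 (n : ℕ) (S : Finset (Equiv.Perm (Fin n)))
    (hid : (1 : Equiv.Perm (Fin n)) ∉ S)
    (hconj : ∀ g s : Equiv.Perm (Fin n), s ∈ S → g⁻¹ * s * g ∈ S)
    (μ : ℂ)
    (hμ : ∃ v : Equiv.Perm (Fin n) → ℂ, v ≠ 0 ∧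
      (Matrix.of fun x y : Equiv.Perm (Fin n) =>
        if y * x⁻¹ ∈ S then (1 : ℂ) else 0).mulVec v = μ • v) :
    ∃ z : ℤ, μ = z :=
  stmt_6_general n S hconj μ hμ
end

section
/- Let m ≥ q ≥ 1 and define e(λ) for partitions λ by the Ku–Wong recurrence e(∅) = 1 and e(λ₁,…,λ_r) = (−1)^{λ_r}·e(λ₁,…,λ_{r−1}) + (−1)^{r−1}·λ_r·e(λ₁−1,…,λ_r−1). Then (m−q+1)·|e(m,q)| ≤ |e(m+1,q−1)|, with equality if and only if q = 1 or m = q = 2. -/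
/-- The partition obtained by deleting the first column: subtract 1 from
each part and drop zero parts. -/
def colErase (l : List ℕ) : List ℕ := (l.map (· - 1)).filter (· ≠ 0)

/-- A list of naturals represents a partition if it is weakly decreasing
with all parts positive. -/
def IsPartition (l : List ℕ) : Prop := l.Pairwise (· ≥ ·) ∧ ∀ x ∈ l, 0 < x

/-!
Unrolling the recurrence along the first column shows that `|e(m, q)|` is
`g m q = d m + q · g (m - 1) (q - 1)` with `g m 0 = d m` the derangement numbers. For `q = 1`
the claim is the derangement identity `m (d m + d (m - 1)) = d (m + 1)`. The general case is
an induction on `q` whose only input, besides `(n + 1) d n ≤ d (n + 1) + 1`, is the bound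
`g m j + 1 ≤ (j + 2) d m` for `m ≥ j + 2`; it is an equality only for `g 2 0 = d 2 = 1`, which
produces the exceptional equality at `m = q = 2`.
-/

def SatisfiesKuWongRecurrence (e : List ℕ → ℤ) : Prop :=
  e [] = 1 ∧ ∀ l : List ℕ, IsPartition l → l ≠ [] →
    e l = (-1) ^ (l.getLastD 0) * e l.dropLast
      + (-1) ^ (l.length - 1) * (l.getLastD 0 : ℤ) * e (colErase l)

lemma succ_mul_numDerangements_le (n : ℕ) :
    (n + 1) * numDerangements n ≤ numDerangements (n + 1) + 1 := by
  have h := numDerangements_succ n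
  zify
  rcases neg_one_pow_eq_or ℤ n with h1 | h1 <;> rw [h1] at h <;> linarith

lemma le_numDerangements_add_one {n : ℕ} (hn : 2 ≤ n) : n ≤ numDerangements n + 1 := by
  induction n, hn using Nat.le_induction with
  | base => decide
  | succ n hn ih => nlinarith [succ_mul_numDerangements_le n]

/-- `|e (m, q)|` for `1 ≤ q ≤ m`, see `SatisfiesKuWongRecurrence.abs_apply_pair`. -/
def twoRowMagnitude : ℕ → ℕ → ℕ
  | m, 0 => numDerangements m
  | m, q + 1 => numDerangements m + (q + 1) * twoRowMagnitude (m - 1) q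

@[simp]
lemma twoRowMagnitude_zero (m : ℕ) : twoRowMagnitude m 0 = numDerangements m := rfl

@[simp]
lemma twoRowMagnitude_succ_succ (m q : ℕ) :
    twoRowMagnitude (m + 1) (q + 1) = numDerangements (m + 1) + (q + 1) * twoRowMagnitude m q :=
  rfl

lemma mul_twoRowMagnitude_one (m : ℕ) : m * twoRowMagnitude m 1 = numDerangements (m + 1) := by
  rcases m with _ | k
  · rfl
  · rw [twoRowMagnitude_succ_succ, twoRowMagnitude_zero, numDerangements_add_two]
    ring

lemma twoRowMagnitude_succ_add_one_lt {j k : ℕ} (hk : j + 2 ≤ k)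
    (h : twoRowMagnitude k j + 1 ≤ (j + 2) * numDerangements k) :
    twoRowMagnitude (k + 1) (j + 1) + 1 < (j + 3) * numDerangements (k + 1) := by
  have hstep := succ_mul_numDerangements_le k
  have hk_le := le_numDerangements_add_one (n := k) (by omega)
  rw [twoRowMagnitude_succ_succ]
  nlinarith

lemma twoRowMagnitude_add_one_le {j m : ℕ} (hm : j + 2 ≤ m) :
    twoRowMagnitude m j + 1 ≤ (j + 2) * numDerangements m := by
  induction j generalizing m with
  | zero =>
    have := le_numDerangements_add_one hm
    simp only [twoRowMagnitude_zero]
    omega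
  | succ j ih =>
    obtain ⟨k, rfl⟩ : ∃ k, m = k + 1 := ⟨m - 1, by omega⟩
    exact (twoRowMagnitude_succ_add_one_lt (by omega) (ih (by omega))).le

lemma twoRowMagnitude_add_one_lt {j m : ℕ} (hm : j + 2 ≤ m) (hm3 : 3 ≤ m) :
    twoRowMagnitude m j + 1 < (j + 2) * numDerangements m := by
  rcases j with _ | j
  · have := le_numDerangements_add_one hm
    simp only [twoRowMagnitude_zero]
    omega
  · obtain ⟨k, rfl⟩ : ∃ k, m = k + 1 := ⟨m - 1, by omega⟩
    exact twoRowMagnitude_succ_add_one_lt (by omega) (twoRowMagnitude_add_one_le (by omega))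

/-- The slack `(j + 2) d (k + 1) - g (k + 1) j - 1` of `twoRowMagnitude_add_one_le` is what
the ratio inequality gains from `j` to `j + 1`. -/
lemma twoRowMagnitude_ratio_step {j k : ℕ} (hk : j + 1 ≤ k)
    (hprev : (k - j) * twoRowMagnitude k (j + 1) ≤ twoRowMagnitude (k + 1) j) :
    (k - j) * twoRowMagnitude (k + 1) (j + 2) + (j + 2) * numDerangements (k + 1)
      ≤ twoRowMagnitude (k + 2) (j + 1) + twoRowMagnitude (k + 1) j + 1 := by
  have hstep := succ_mul_numDerangements_le (k + 1)
  have hgap : k - j + j = k := Nat.sub_add_cancel (by omega)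
  rw [twoRowMagnitude_succ_succ, twoRowMagnitude_succ_succ]
  nlinarith [Nat.mul_le_mul_left (j + 2) hprev]

lemma sub_mul_twoRowMagnitude_le {j m : ℕ} (hm : j + 1 ≤ m) :
    (m - j) * twoRowMagnitude m (j + 1) ≤ twoRowMagnitude (m + 1) j := by
  induction j generalizing m with
  | zero => simp [mul_twoRowMagnitude_one]
  | succ j ih =>
    obtain ⟨k, rfl⟩ : ∃ k, m = k + 1 := ⟨m - 1, by omega⟩
    have hstep := twoRowMagnitude_ratio_step (by omega) (ih (m := k) (by omega))
    have hslack := twoRowMagnitude_add_one_le (j := j) (m := k + 1) (by omega)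
    rw [Nat.add_sub_add_right]
    change (k - j) * twoRowMagnitude (k + 1) (j + 2) ≤ twoRowMagnitude (k + 2) (j + 1)
    omega

lemma sub_mul_twoRowMagnitude_lt {j m : ℕ} (hm : j + 2 ≤ m) (hm3 : 3 ≤ m) :
    (m - (j + 1)) * twoRowMagnitude m (j + 2) < twoRowMagnitude (m + 1) (j + 1) := by
  obtain ⟨k, rfl⟩ : ∃ k, m = k + 1 := ⟨m - 1, by omega⟩
  have hstep := twoRowMagnitude_ratio_step (by omega)
    (sub_mul_twoRowMagnitude_le (j := j) (m := k) (by omega))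
  have hslack := twoRowMagnitude_add_one_lt (j := j) (m := k + 1) (by omega) hm3
  rw [Nat.add_sub_add_right]
  change (k - j) * twoRowMagnitude (k + 1) (j + 2) < twoRowMagnitude (k + 2) (j + 1)
  omega

theorem twoRowMagnitude_ratio {m q : ℕ} (hq : 1 ≤ q) (hqm : q ≤ m) :
    (m + 1 - q) * twoRowMagnitude m q ≤ twoRowMagnitude (m + 1) (q - 1) ∧
      ((m + 1 - q) * twoRowMagnitude m q = twoRowMagnitude (m + 1) (q - 1) ↔
        q = 1 ∨ m = 2 ∧ q = 2) := by
  obtain ⟨j, rfl⟩ : ∃ j, q = j + 1 := ⟨q - 1, by omega⟩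
  rcases j with _ | j
  · have h := mul_twoRowMagnitude_one m
    simp only [Nat.add_sub_cancel, twoRowMagnitude_zero, h, le_refl, true_or, and_self]
  · have hle := sub_mul_twoRowMagnitude_le (j := j + 1) (m := m) (by omega)
    rw [show m + 1 - (j + 1 + 1) = m - (j + 1) by omega, Nat.add_sub_cancel]
    refine ⟨hle, ⟨fun heq => ?_, ?_⟩⟩
    · by_contra hgeneric
      exact (sub_mul_twoRowMagnitude_lt (by omega) (by omega)).ne heq
    · rintro (h | ⟨rfl, h⟩)
      · omega
      · obtain rfl : j = 0 := by omega
        decide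

namespace SatisfiesKuWongRecurrence

variable {e : List ℕ → ℤ}

lemma apply_colErase_singleton (he : SatisfiesKuWongRecurrence e) (n : ℕ) :
    e (colErase [n + 1]) = numDerangements n := by
  induction n with
  | zero => simpa [colErase] using he.1
  | succ n ih =>
    have hcol : colErase [n + 1 + 1] = [n + 1] := by simp [colErase]
    rw [hcol, he.2 [n + 1] ⟨by simp, by simp⟩ (by simp), numDerangements_succ]
    simp [he.1, ih, pow_succ]
    ring

lemma apply_singleton (he : SatisfiesKuWongRecurrence e) (n : ℕ) :
    e [n + 1] = numDerangements (n + 1) := by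
  simpa [colErase] using he.apply_colErase_singleton (n + 1)

lemma apply_pair_eq (he : SatisfiesKuWongRecurrence e) {j k : ℕ} (hjk : j ≤ k) :
    e [k + 1, j + 1] = (-1) ^ (j + 1) * numDerangements (k + 1)
      - (j + 1) * e (colErase [k + 1, j + 1]) := by
  rw [he.2 [k + 1, j + 1] ⟨by simp; omega, by simp⟩ (by simp)]
  simp [he.apply_singleton]
  ring

lemma apply_pair (he : SatisfiesKuWongRecurrence e) {j k : ℕ} (hjk : j ≤ k) :
    e [k + 1, j + 1] = (-1) ^ (j + 1) * twoRowMagnitude (k + 1) (j + 1) := by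
  induction j generalizing k with
  | zero =>
    have hcol : colErase [k + 1, 1] = colErase [k + 1] := by simp [colErase, List.filter_cons]
    rw [he.apply_pair_eq hjk, hcol, he.apply_colErase_singleton, twoRowMagnitude_succ_succ,
      twoRowMagnitude_zero]
    push_cast
    ring
  | succ j ih =>
    obtain ⟨k, rfl⟩ : ∃ k', k = k' + 1 := ⟨k - 1, by omega⟩
    have hcol : colErase [k + 1 + 1, j + 1 + 1] = [k + 1, j + 1] := by simp [colErase]
    rw [he.apply_pair_eq hjk, hcol, ih (by omega), twoRowMagnitude_succ_succ (k + 1) (j + 1)]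
    push_cast
    ring

lemma abs_apply_pair (he : SatisfiesKuWongRecurrence e) {m q : ℕ} (hq : 1 ≤ q) (hqm : q ≤ m) :
    |e [m, q]| = twoRowMagnitude m q := by
  obtain ⟨j, rfl⟩ : ∃ j, q = j + 1 := ⟨q - 1, by omega⟩
  obtain ⟨k, rfl⟩ : ∃ k, m = k + 1 := ⟨m - 1, by omega⟩
  rw [he.apply_pair (by omega), abs_mul, abs_pow, abs_neg, abs_one, one_pow, one_mul, Nat.abs_cast]

end SatisfiesKuWongRecurrence

theorem stmt_9 (e : List ℕ → ℤ) (h0 : e [] = 1)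
    (hrec : ∀ l : List ℕ, IsPartition l → l ≠ [] →
      e l = (-1) ^ (l.getLastD 0) * e l.dropLast
        + (-1) ^ (l.length - 1) * (l.getLastD 0 : ℤ) * e (colErase l))
    (m q : ℕ) (hq : 1 ≤ q) (hmq : q ≤ m) :
    ((m : ℤ) - q + 1) * |e [m, q]| ≤ |e (if q = 1 then [m + 1] else [m + 1, q - 1])| ∧
      (((m : ℤ) - q + 1) * |e [m, q]| = |e (if q = 1 then [m + 1] else [m + 1, q - 1])| ↔
        q = 1 ∨ (m = 2 ∧ q = 2)) := by
  have he : SatisfiesKuWongRecurrence e := ⟨h0, hrec⟩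
  have htarget :
      |e (if q = 1 then [m + 1] else [m + 1, q - 1])| = twoRowMagnitude (m + 1) (q - 1) := by
    split_ifs with h
    · simp [h, he.apply_singleton]
    · exact he.abs_apply_pair (by omega) (by omega)
  have hcoef : (m : ℤ) - q + 1 = ((m + 1 - q : ℕ) : ℤ) := by omega
  rw [he.abs_apply_pair hq hmq, htarget, hcoef]
  exact_mod_cast twoRowMagnitude_ratio hq hmq
end

section
/- Define a(λ) for partitions λ by a(∅) = 1 and, for λ = (λ₁,…,λ_r) with r ≥ 1, a(λ) = a(λ₁,…,λ_{r−1}) + λ_r·a(λ₁−1,…,λ_r−1) (dropping zero parts). Then for all q ≥ 1 and t ≥ 1, a(q^t, q−1) < a(q^t, q), where (q^t, q−1) denotes the partition with t parts equal to q followed by one part q−1 (omitted if q = 1). -/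
/-!
Write `L q = (q^t, q-1)` and `R q = (q^{t+1})`. Removing the last row of `L (q+1)` and of
`R (q+1)` leaves the same rectangle `A = ((q+1)^t)`, while removing their first columns gives
`L q` and `R q`. Hence `a (L (q+1)) = a A + q a (L q)` and `a (R (q+1)) = a A + (q+1) a (R q)`,
so the difference grows by induction on `q`, using only that `a` is positive on partitions.
-/

open List

def ColumnRecursion (a : List ℕ → ℤ) : Prop :=
  ∀ l : List ℕ, IsPartition l → l ≠ [] → a l = a l.dropLast + (l.getLastD 0 : ℤ) * a (colErase l)

theorem colErase_append (l₁ l₂ : List ℕ) : colErase (l₁ ++ l₂) = colErase l₁ ++ colErase l₂ := by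
  simp [colErase]

theorem colErase_replicate_one (n : ℕ) : colErase (replicate n 1) = [] := by
  simp [colErase]

theorem colErase_replicate_add_two (n q : ℕ) :
    colErase (replicate n (q + 2)) = replicate n (q + 1) := by
  simp [colErase]

theorem colErase_singleton {q : ℕ} (hq : 1 ≤ q) :
    colErase [q] = if q = 1 then [] else [q - 1] := by
  split_ifs <;> simp [colErase] <;> omega

namespace IsPartition

theorem dropLast {l : List ℕ} (h : IsPartition l) : IsPartition l.dropLast :=
  ⟨h.1.sublist (dropLast_sublist l), fun x hx => h.2 x (dropLast_subset l hx)⟩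

theorem colErase {l : List ℕ} (h : IsPartition l) : IsPartition (colErase l) := by
  refine ⟨(h.1.map (· - 1) fun _ _ hxy => show _ ≥ _ from Nat.sub_le_sub_right hxy 1).sublist filter_sublist, ?_⟩
  intro x hx
  simp only [_root_.colErase, mem_filter, decide_eq_true_eq] at hx
  omega

theorem getLastD_pos {l : List ℕ} (h : IsPartition l) (hne : l ≠ []) : 0 < l.getLastD 0 := by
  rw [getLastD_eq_getLast?, getLast?_eq_some_getLast hne]
  exact h.2 _ (getLast_mem hne)

theorem sum_dropLast_lt {l : List ℕ} (h : IsPartition l) (hne : l ≠ []) :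
    l.dropLast.sum < l.sum := by
  conv_rhs => rw [← dropLast_append_getLast hne]
  have := h.2 _ (getLast_mem hne)
  simp only [sum_append, sum_singleton]
  omega

theorem sum_colErase_lt {l : List ℕ} (h : IsPartition l) (hne : l ≠ []) :
    (_root_.colErase l).sum < l.sum := by
  have hfilter : (_root_.colErase l).sum ≤ (l.map (· - 1)).sum :=
    filter_sublist.sum_le_sum (by simp)
  have hmap : (l.map (· - 1)).sum < (l.map id).sum :=
    sum_lt_sum_of_ne_nil hne _ _ fun x hx => Nat.sub_lt (h.2 x hx) one_pos
  rw [map_id] at hmap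
  omega

theorem replicate {n q : ℕ} (hq : 1 ≤ q) : IsPartition (replicate n q) :=
  ⟨pairwise_replicate.mpr (Or.inr le_rfl), fun _ hx => (eq_of_mem_replicate hx) ▸ hq⟩

theorem replicate_append_singleton {n q r : ℕ} (hr : 1 ≤ r) (hrq : r ≤ q) :
    IsPartition (List.replicate n q ++ [r]) := by
  refine ⟨pairwise_append.mpr ⟨(replicate (hr.trans hrq)).1, by simp, ?_⟩, ?_⟩
  · intro x hx y hy
    rw [eq_of_mem_replicate hx, mem_singleton.mp hy]
    exact hrq
  · intro x hx
    rcases mem_append.mp hx with hx | hx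
    · rw [eq_of_mem_replicate hx]; omega
    · rw [mem_singleton.mp hx]; exact hr

end IsPartition

theorem ColumnRecursion.pos {a : List ℕ → ℤ} (h0 : a [] = 1) (hrec : ColumnRecursion a)
    (l : List ℕ) (hl : IsPartition l) : 0 < a l := by
  rcases eq_or_ne l [] with rfl | hne
  · simp [h0]
  have hlast : (0 : ℤ) < l.getLastD 0 := by exact_mod_cast hl.getLastD_pos hne
  have := ColumnRecursion.pos h0 hrec _ hl.dropLast
  have := ColumnRecursion.pos h0 hrec _ hl.colErase
  rw [hrec l hl hne]
  positivity
termination_by l.sum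
decreasing_by
  · exact hl.sum_dropLast_lt hne
  · exact hl.sum_colErase_lt hne

theorem ColumnRecursion.apply_replicate_append_singleton {a : List ℕ → ℤ}
    (hrec : ColumnRecursion a) {n q r : ℕ} (hr : 1 ≤ r) (hrq : r ≤ q) :
    a (replicate n q ++ [r]) =
      a (replicate n q) + r * a (colErase (replicate n q) ++ colErase [r]) := by
  rw [hrec _ (.replicate_append_singleton hr hrq) (by simp), colErase_append]
  simp [getLastD_eq_getLast?]

theorem ColumnRecursion.apply_replicate_append_colErase_lt {a : List ℕ → ℤ} (h0 : a [] = 1)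
    (hrec : ColumnRecursion a) (t : ℕ) {q : ℕ} (hq : 1 ≤ q) :
    a (replicate t q ++ colErase [q]) < a (replicate (t + 1) q) := by
  induction q, hq using Nat.le_induction with
  | base =>
    rw [replicate_succ', hrec.apply_replicate_append_singleton le_rfl le_rfl,
      colErase_replicate_one]
    simp [colErase, h0]
  | succ q hq ih =>
    obtain ⟨p, rfl⟩ : ∃ p, q = p + 1 := ⟨q - 1, by omega⟩
    have hR : 0 < a (replicate (t + 1) (p + 1)) := hrec.pos h0 _ (.replicate hq)
    have hlast : colErase [p + 2] = [p + 1] := by simp [colErase]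
    rw [hlast, replicate_succ', hrec.apply_replicate_append_singleton (by omega) le_rfl,
      hrec.apply_replicate_append_singleton hq (by omega), colErase_replicate_add_two, hlast,
      ← replicate_succ']
    push_cast
    nlinarith

theorem stmt_10_general (a : List ℕ → ℤ) (h0 : a [] = 1)
    (hrec : ∀ l : List ℕ, IsPartition l → l ≠ [] →
      a l = a l.dropLast + (l.getLastD 0 : ℤ) * a (colErase l))
    (q t : ℕ) (hq : 1 ≤ q) :
    a (List.replicate t q ++ if q = 1 then [] else [q - 1]) <
      a (List.replicate (t + 1) q) := by
  rw [← colErase_singleton hq]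
  exact ColumnRecursion.apply_replicate_append_colErase_lt h0 hrec t hq

theorem stmt_10 (a : List ℕ → ℤ) (h0 : a [] = 1)
    (hrec : ∀ l : List ℕ, IsPartition l → l ≠ [] →
      a l = a l.dropLast + (l.getLastD 0 : ℤ) * a (colErase l))
    (q t : ℕ) (hq : 1 ≤ q) (ht : 1 ≤ t) :
    a (List.replicate t q ++ if q = 1 then [] else [q - 1]) <
      a (List.replicate (t + 1) q) :=
  stmt_10_general a h0 hrec q t hq
end

section
/- For 1 ≤ p ≤ n−1, let λ = (n−p, 1^p) and μ = (n−p+1, 1^{p−1}) be hook partitions of n. With f^ν the number of standard Young tableaux of shape ν, and with η_λ(0) = 1 + (−1)^{n−p}·n·d_{n−p−1} and η_μ(0) = 1 + (−1)^{n−p+1}·n·d_{n−p}, one has f^λ·|η_λ(0)| ≤ f^μ·|η_μ(0)|, with equality if and only if p = 1 or n−p = 1. -/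
set_option maxHeartbeats 1000000 in
theorem stmt_13 (d : ℕ → ℤ) (hd0 : d 0 = 1)
    (hd : ∀ n : ℕ, 1 ≤ n → d n = (-1) ^ n + n * d (n - 1))
    (n p : ℕ) (hp1 : 1 ≤ p) (hpn : p ≤ n - 1) :
    let fl : ℚ := (n.factorial : ℚ) / (n * (n - p - 1).factorial * p.factorial)
    let fm : ℚ := (n.factorial : ℚ) / (n * (n - p).factorial * (p - 1).factorial)
    let el : ℤ := 1 + (-1) ^ (n - p) * n * d (n - p - 1)
    let em : ℤ := 1 + (-1) ^ (n - p + 1) * n * d (n - p)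
    fl * |(el : ℚ)| ≤ fm * |(em : ℚ)| ∧
      (fl * |(el : ℚ)| = fm * |(em : ℚ)| ↔ p = 1 ∨ n - p = 1) := by
  intro fl fm el em
  have hfl : fl = (n.factorial : ℚ) / (n * (n - p - 1).factorial * p.factorial) := rfl
  have hfm : fm = (n.factorial : ℚ) / (n * (n - p).factorial * (p - 1).factorial) := rfl
  have hel : el = 1 + (-1) ^ (n - p) * n * d (n - p - 1) := rfl
  have hem : em = 1 + (-1) ^ (n - p + 1) * n * d (n - p) := rfl
  clear_value fl fm el em
  obtain ⟨m, hm1, hnm⟩ : ∃ m, 1 ≤ m ∧ n = m + p := ⟨n - p, by omega, by omega⟩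
  have e1 : n - p - 1 = m - 1 := by omega
  have e2 : n - p = m := by omega
  rw [e1] at hfl hel
  rw [e2] at hfm hel hem ⊢
  have hn' : (n : ℤ) = m + p := by exact_mod_cast hnm
  have hp' : (1 : ℤ) ≤ (p : ℤ) := by exact_mod_cast hp1
  -- properties of d
  have hdprop : ∀ k, 0 ≤ d k ∧ (k ≠ 1 → 1 ≤ d k) := by
    intro k
    induction k with
    | zero => simp [hd0]
    | succ j ih =>
      rw [hd (j + 1) (by omega)]
      simp only [Nat.add_sub_cancel]
      rcases Nat.even_or_odd (j + 1) with h | h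
      · rw [h.neg_one_pow]
        have h0 : (0 : ℤ) ≤ ((j : ℤ) + 1) * d j := mul_nonneg (by positivity) ih.1
        push_cast
        exact ⟨by linarith, fun _ => by linarith⟩
      · rw [h.neg_one_pow]
        rcases Nat.eq_zero_or_pos j with rfl | hj
        · simp [hd0]
        · have hje : Even j := Nat.not_odd_iff_even.mp (Nat.odd_add_one.mp h)
          have hj2 : j ≠ 1 := by rintro rfl; exact (by decide : ¬ Even 1) hje
          have hj3 : 2 ≤ j := by obtain ⟨r, hr⟩ := hje; omega
          have h1 : (1 : ℤ) ≤ d j := ih.2 hj2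
          have h2 : (3 : ℤ) ≤ (j : ℤ) + 1 := by exact_mod_cast by omega
          push_cast
          constructor
          · nlinarith
          · intro _; nlinarith
  -- relation between em and el
  have hrel : em = -((m : ℤ) * el + p - 1) := by
    rw [hem, hel, hd m hm1]
    have hx : ((-1 : ℤ)) ^ (m + 1) = -((-1 : ℤ)) ^ m := by rw [pow_succ]; ring
    have hx2 : ((-1 : ℤ)) ^ m * ((-1 : ℤ)) ^ m = 1 := by
      rw [← pow_add, ← two_mul, pow_mul]; norm_num
    rw [hx, hn']
    linear_combination (-((m : ℤ) + p)) * hx2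
  -- case facts about el
  have hcases : (2 ≤ m ∧ 1 ≤ el) ∨ (m = 1 ∧ el = -(p : ℤ)) ∨
      (2 ≤ m ∧ el ≤ 1 - (m : ℤ) - p) := by
    rcases Nat.even_or_odd m with hpar | hpar
    · left
      have hm2 : 2 ≤ m := by obtain ⟨r, hr⟩ := hpar; omega
      refine ⟨hm2, ?_⟩
      rw [hel, hpar.neg_one_pow]
      have h0 : (0 : ℤ) ≤ (n : ℤ) * d (m - 1) :=
        mul_nonneg (by positivity) (hdprop (m - 1)).1
      linarith
    · rcases eq_or_ne m 1 with rfl | hm1'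
      · right; left
        refine ⟨rfl, ?_⟩
        rw [hel]
        norm_num [hd0]
        linarith [hn']
      · right; right
        have hje : Even (m - 1) := by
          obtain ⟨r, hr⟩ := hpar; exact ⟨r, by omega⟩
        have hm3 : 3 ≤ m := by obtain ⟨r, hr⟩ := hpar; omega
        refine ⟨by omega, ?_⟩
        rw [hel, hpar.neg_one_pow]
        have hd1 : (1 : ℤ) ≤ d (m - 1) := (hdprop (m - 1)).2 (by omega)
        have h0 : (0 : ℤ) ≤ (n : ℤ) * (d (m - 1) - 1) :=
          mul_nonneg (by positivity) (by linarith)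
        nlinarith
  -- the key integer inequality
  have key : (m : ℤ) * |el| ≤ (p : ℤ) * |em| ∧
      ((m : ℤ) * |el| = (p : ℤ) * |em| ↔ p = 1 ∨ m = 1) := by
    clear hd hdprop hfl hfm hel hem
    rcases hcases with ⟨hm2, hE⟩ | ⟨hm2, hE⟩ | ⟨hm2, hE⟩
    · have hm2' : (2 : ℤ) ≤ (m : ℤ) := by exact_mod_cast hm2
      have hq1 : (0 : ℤ) ≤ (m : ℤ) * (el - 1) :=
        mul_nonneg (by positivity) (by linarith)
      have hq0 : (2 : ℤ) ≤ (m : ℤ) * el := by nlinarith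
      have habs1 : |el| = el := abs_of_pos (by linarith)
      have habs2 : |em| = (m : ℤ) * el + p - 1 := by
        rw [hrel, abs_neg, abs_of_pos (by linarith)]
      rw [habs1, habs2]
      have hq2 : (0 : ℤ) ≤ ((p : ℤ) - 1) * ((m : ℤ) * el) :=
        mul_nonneg (by linarith) (by linarith)
      have hq3 : (0 : ℤ) ≤ ((p : ℤ) - 1) * (p : ℤ) :=
        mul_nonneg (by linarith) (by linarith)
      constructor
      · nlinarith [hq2, hq3]
      constructor
      · intro h
        left
        by_contra hp2
        have hp3 : (2 : ℤ) ≤ (p : ℤ) := by exact_mod_cast (by omega : 2 ≤ p)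
        have hq4 : (2 : ℤ) ≤ ((p : ℤ) - 1) * ((m : ℤ) * el) := by nlinarith
        have hq5 : (2 : ℤ) ≤ ((p : ℤ) - 1) * (p : ℤ) := by nlinarith
        nlinarith [hq4, hq5]
      · rintro (rfl | rfl)
        · push_cast; ring
        · omega
    · subst hm2
      have hem1 : em = 1 := by rw [hrel, hE]; push_cast; ring
      rw [hE, hem1, abs_neg, abs_of_nonneg (by positivity : (0:ℤ) ≤ (p:ℤ)),
        abs_one]
      exact ⟨le_of_eq (by push_cast; ring), fun _ => Or.inr rfl,
        fun _ => by push_cast; ring⟩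
    · have hm2' : (2 : ℤ) ≤ (m : ℤ) := by exact_mod_cast hm2
      have hF : (m : ℤ) + p - 1 ≤ -el := by linarith
      have habs1 : |el| = -el := abs_of_neg (by linarith)
      have hX : (m : ℤ) * el + p - 1 < 0 := by nlinarith
      have habs2 : |em| = -((m : ℤ) * el + p - 1) := by
        rw [hrel, abs_neg, abs_of_neg hX]
      rw [habs1, habs2]
      have hprod : (0:ℤ) ≤ ((p:ℤ) - 1) * ((m : ℤ) * (-el) - p) := by
        have h4 : (p : ℤ) + 2 ≤ (m : ℤ) * (-el) := by nlinarith
        exact mul_nonneg (by linarith) (by linarith)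
      constructor
      · nlinarith
      constructor
      · intro h
        left
        by_contra hp2
        have hp3 : (2 : ℤ) ≤ (p : ℤ) := by exact_mod_cast (by omega : 2 ≤ p)
        have h4 : (p : ℤ) + 2 ≤ (m : ℤ) * (-el) := by nlinarith
        nlinarith
      · rintro (rfl | rfl)
        · push_cast; ring
        · omega
  -- positivity and the ratio identity for fl, fm
  have hQp : (0 : ℚ) < (p : ℚ) := by exact_mod_cast hp1
  have hnQ : (0 : ℚ) < (n : ℚ) := by exact_mod_cast (by omega : 0 < n)
  have hfm0 : (0 : ℚ) < fm := by
    rw [hfm]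
    apply div_pos
    · exact_mod_cast n.factorial_pos
    · apply mul_pos (mul_pos hnQ _)
      · exact_mod_cast (p - 1).factorial_pos
      · exact_mod_cast m.factorial_pos
  have hflp : fl * p = fm * m := by
    rw [hfl, hfm]
    obtain ⟨p', rfl⟩ : ∃ p', p = p' + 1 := ⟨p - 1, by omega⟩
    obtain ⟨m', rfl⟩ : ∃ m', m = m' + 1 := ⟨m - 1, by omega⟩
    simp only [Nat.add_sub_cancel, Nat.factorial_succ]
    have h1 : (Nat.factorial p' : ℚ) ≠ 0 := by
      exact_mod_cast p'.factorial_pos.ne'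
    have h2 : (Nat.factorial m' : ℚ) ≠ 0 := by
      exact_mod_cast m'.factorial_pos.ne'
    have h3 : (n : ℚ) ≠ 0 := hnQ.ne'
    push_cast
    field_simp
  -- transfer to ℚ
  have kQ1 : (m : ℚ) * |(el : ℚ)| ≤ (p : ℚ) * |(em : ℚ)| := by
    exact_mod_cast key.1
  have main_le : fl * |(el : ℚ)| ≤ fm * |(em : ℚ)| := by
    have h2 : (p : ℚ) * (fl * |(el : ℚ)|) ≤ (p : ℚ) * (fm * |(em : ℚ)|) := by
      calc (p : ℚ) * (fl * |(el : ℚ)|) = (fl * p) * |(el : ℚ)| := by ring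
        _ = (fm * m) * |(el : ℚ)| := by rw [hflp]
        _ = fm * ((m : ℚ) * |(el : ℚ)|) := by ring
        _ ≤ fm * ((p : ℚ) * |(em : ℚ)|) := mul_le_mul_of_nonneg_left kQ1 hfm0.le
        _ = (p : ℚ) * (fm * |(em : ℚ)|) := by ring
    exact le_of_mul_le_mul_left h2 hQp
  refine ⟨main_le, ?_⟩
  constructor
  · intro h
    have h2 : fm * ((m : ℚ) * |(el : ℚ)|) = fm * ((p : ℚ) * |(em : ℚ)|) := by
      calc fm * ((m : ℚ) * |(el : ℚ)|) = (fm * m) * |(el : ℚ)| := by ring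
        _ = (fl * p) * |(el : ℚ)| := by rw [hflp]
        _ = (p : ℚ) * (fl * |(el : ℚ)|) := by ring
        _ = (p : ℚ) * (fm * |(em : ℚ)|) := by rw [h]
        _ = fm * ((p : ℚ) * |(em : ℚ)|) := by ring
    have h3 : (m : ℚ) * |(el : ℚ)| = (p : ℚ) * |(em : ℚ)| :=
      mul_left_cancel₀ hfm0.ne' h2
    have h4 : (m : ℤ) * |el| = (p : ℤ) * |em| := by exact_mod_cast h3
    exact key.2.mp h4
  · intro h
    have h4 : (m : ℤ) * |el| = (p : ℤ) * |em| := key.2.mpr h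
    have h3 : (m : ℚ) * |(el : ℚ)| = (p : ℚ) * |(em : ℚ)| := by exact_mod_cast h4
    have h2 : (p : ℚ) * (fl * |(el : ℚ)|) = (p : ℚ) * (fm * |(em : ℚ)|) := by
      calc (p : ℚ) * (fl * |(el : ℚ)|) = (fl * p) * |(el : ℚ)| := by ring
        _ = (fm * m) * |(el : ℚ)| := by rw [hflp]
        _ = fm * ((m : ℚ) * |(el : ℚ)|) := by ring
        _ = fm * ((p : ℚ) * |(em : ℚ)|) := by rw [h3]
        _ = (p : ℚ) * (fm * |(em : ℚ)|) := by ring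
    exact mul_left_cancel₀ hQp.ne' h2
end

section
/- For integers n ≥ 2, k ≥ 1, m ≥ q ≥ 2 and any weakly decreasing tail α₁ ≥ … ≥ α_r with q > α₁, let λ = (m, q^k, α₁,…,α_r) and μ = (m+1, q^{k−1}, q−1, α₁,…,α_r) be partitions of n. Then the ratio of hook-length products satisfies H^μ/H^λ < (m−q+1)/k, where H^ν is the product of all hook lengths of ν; equivalently f^λ/f^μ < (m−q+1)/k for the numbers of standard Young tableaux. -/
/-!
The hooks of a row depend only on the rows below it, so both hook products factor row by row.
Write `q = Q + 1`, `k = K + 1`, `m = q + d` and `b_j = Q - j + #{y ∈ α | j < y}` for `j < Q`, the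
hooks of the row `Q` of `μ`. In its first `Q` columns every row of `λ` and `μ` above `α` has the
hooks `b_j + t` for some shift `t`, so after cancellation
  `H^μ / H^λ = (d + 1) / (K + 1) · ∏_j (b_j + d + K + 3) b_j / ((b_j + d + K + 2) (b_j + 1))`,
and each factor of the product is `< 1` because `(b + u + 1) b < (b + u) (b + 1)` for `u > 0`.
-/

/-- The product of the hook lengths of the partition given by the list `l`
(parts listed from largest to smallest): the hook length of the cell in row
`i` (0-indexed) and column `j` is the number of cells to its right in its
row, plus the number of cells below it in its column, plus one. -/
def hookProd (l : List ℕ) : ℕ :=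
  ∏ i ∈ Finset.range l.length, ∏ j ∈ Finset.range (l.getD i 0),
    (l.getD i 0 - j + (List.drop (i + 1) l).countP (fun x => j < x))

open Finset

def rowProd (x : ℕ) (l : List ℕ) : ℕ :=
  ∏ j ∈ range x, (x - j + l.countP (j < ·))

def shiftedRowProd (Q : ℕ) (l : List ℕ) (t : ℕ) : ℕ :=
  ∏ j ∈ range Q, (Q - j + l.countP (j < ·) + t)

lemma hookProd_cons (x : ℕ) (l : List ℕ) :
    hookProd (x :: l) = rowProd x l * hookProd l := by
  simp only [hookProd, rowProd, List.length_cons, prod_range_succ', List.getD_cons_succ,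
    List.getD_cons_zero, List.drop_succ_cons, List.drop_zero]
  ring

lemma hookProd_pos (l : List ℕ) : 0 < hookProd l :=
  prod_pos fun _ _ => prod_pos fun j hj => by
    have := mem_range.1 hj
    omega

lemma hookProd_replicate_append (k x : ℕ) (l : List ℕ) :
    hookProd (List.replicate k x ++ l) =
      (∏ i ∈ range k, rowProd x (List.replicate i x ++ l)) * hookProd l := by
  induction k with
  | zero => simp
  | succ k ih =>
    rw [List.replicate_succ, List.cons_append, hookProd_cons, ih, prod_range_succ]
    ring

lemma rowProd_eq_shiftedRowProd_zero (Q : ℕ) (l : List ℕ) :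
    rowProd Q l = shiftedRowProd Q l 0 := rfl

lemma shiftedRowProd_pos (Q : ℕ) (l : List ℕ) (t : ℕ) : 0 < shiftedRowProd Q l t :=
  prod_pos fun j hj => by
    have := mem_range.1 hj
    omega

lemma shiftedRowProd_cons (Q : ℕ) (l : List ℕ) (t : ℕ) :
    shiftedRowProd Q (Q :: l) t = shiftedRowProd Q l (t + 1) :=
  prod_congr rfl fun j hj => by
    have := mem_range.1 hj
    simp only [List.countP_cons, decide_eq_true_eq, if_pos this]
    ring

lemma countP_lt_eq_zero {Q j : ℕ} {l : List ℕ} (hl : ∀ y ∈ l, y ≤ Q) (hj : Q ≤ j) :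
    l.countP (j < ·) = 0 :=
  List.countP_eq_zero.2 fun y hy => by
    have := hl y hy
    simp only [decide_eq_true_eq]
    omega

/-- Columns `j < Q` contribute the shifted hooks, column `Q` the hook `d + i + 1`, and the last
`d` cells the hooks `d, …, 1`. -/
lemma rowProd_replicate_append (Q d i : ℕ) {l : List ℕ} (hl : ∀ y ∈ l, y ≤ Q) :
    rowProd (Q + 1 + d) (List.replicate i (Q + 1) ++ l) =
      shiftedRowProd Q l (d + i + 1) * (d + i + 1) * d.factorial := by
  have hcount (j : ℕ) : (List.replicate i (Q + 1) ++ l).countP (j < ·) =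
      (if j < Q + 1 then i else 0) + l.countP (j < ·) := by
    simp [List.countP_append, List.countP_replicate]
  rw [rowProd, prod_range_add, prod_range_succ, ← Nat.descFactorial_self,
    Nat.descFactorial_eq_prod_range]
  congr 1
  · congr 1
    · refine prod_congr rfl fun j hj => ?_
      have := mem_range.1 hj
      rw [hcount, if_pos (by omega)]
      omega
    · rw [hcount, if_pos (by omega), countP_lt_eq_zero hl le_rfl]
      omega
  · refine prod_congr rfl fun j _ => ?_
    rw [hcount, if_neg (by omega), countP_lt_eq_zero hl (by omega)]
    omega

lemma prod_add_succ_mul_prod_lt {ι : Type*} {s : Finset ι} (hs : s.Nonempty) {b : ι → ℕ}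
    (hb : ∀ i ∈ s, 0 < b i) {t u : ℕ} (htu : t < u) :
    (∏ i ∈ s, (b i + (u + 1))) * ∏ i ∈ s, (b i + t) <
      (∏ i ∈ s, (b i + u)) * ∏ i ∈ s, (b i + (t + 1)) := by
  simp only [← prod_mul_distrib]
  refine prod_lt_prod_of_nonempty (fun i hi => ?_) (fun i _ => ?_) hs
  · have := hb i hi
    positivity
  · nlinarith

lemma shiftedRowProd_succ_mul_lt {Q : ℕ} (hQ : 0 < Q) (l : List ℕ) {t u : ℕ} (htu : t < u) :
    shiftedRowProd Q l (u + 1) * shiftedRowProd Q l t <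
      shiftedRowProd Q l u * shiftedRowProd Q l (t + 1) :=
  prod_add_succ_mul_prod_lt (nonempty_range_iff.2 hQ.ne')
    (fun j hj => by have := mem_range.1 hj; omega) htu

section ClosedForms

variable (Q d K : ℕ) {α : List ℕ} (hα : ∀ y ∈ α, y ≤ Q)
include hα

lemma hookProd_lambda :
    hookProd ((Q + 1 + d) :: (List.replicate (K + 1) (Q + 1) ++ α)) =
      shiftedRowProd Q α (d + K + 2) * shiftedRowProd Q α 1 * (d + K + 2) * d.factorial *
        (∏ i ∈ range K, shiftedRowProd Q α (i + 2)) * (K + 1).factorial * hookProd α := by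
  rw [hookProd_cons, hookProd_replicate_append, rowProd_replicate_append Q d _ hα,
    prod_congr rfl fun i _ => by simpa using rowProd_replicate_append Q 0 i hα,
    prod_mul_distrib, prod_range_add_one_eq_factorial, prod_range_succ']
  ring_nf

lemma hookProd_mu :
    hookProd ((Q + 1 + d + 1) :: (List.replicate K (Q + 1) ++ Q :: α)) =
      shiftedRowProd Q α (d + K + 3) * shiftedRowProd Q α 0 * (d + K + 2) * (d + 1).factorial *
        (∏ i ∈ range K, shiftedRowProd Q α (i + 2)) * K.factorial * hookProd α := by
  have hQα : ∀ y ∈ Q :: α, y ≤ Q := by simpa using hα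
  rw [hookProd_cons, hookProd_replicate_append, Nat.add_assoc _ d,
    rowProd_replicate_append Q (d + 1) _ hQα,
    prod_congr rfl fun i _ => by simpa using rowProd_replicate_append Q 0 i hQα,
    prod_mul_distrib, prod_range_add_one_eq_factorial, hookProd_cons,
    rowProd_eq_shiftedRowProd_zero]
  simp only [shiftedRowProd_cons]
  ring_nf

end ClosedForms

lemma hookProd_mu_mul_lt {Q : ℕ} (hQ : 0 < Q) (d K : ℕ) {α : List ℕ} (hα : ∀ y ∈ α, y ≤ Q) :
    hookProd ((Q + 1 + d + 1) :: (List.replicate K (Q + 1) ++ Q :: α)) * (K + 1) <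
      (d + 1) * hookProd ((Q + 1 + d) :: (List.replicate (K + 1) (Q + 1) ++ α)) := by
  set S := shiftedRowProd Q α
  have hC : 0 < (d + K + 2) * d.factorial * (∏ i ∈ range K, S (i + 2)) * K.factorial *
      hookProd α * ((d + 1) * (K + 1)) := by
    have := prod_pos fun i (_ : i ∈ range K) => shiftedRowProd_pos Q α (i + 2)
    have := hookProd_pos α
    positivity
  rw [hookProd_mu Q d K hα, hookProd_lambda Q d K hα, Nat.factorial_succ, Nat.factorial_succ]
  calc _ = S (d + K + 2 + 1) * S 0 * ((d + K + 2) * d.factorial * (∏ i ∈ range K, S (i + 2)) *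
          K.factorial * hookProd α * ((d + 1) * (K + 1))) := by ring
    _ < S (d + K + 2) * S (0 + 1) * ((d + K + 2) * d.factorial * (∏ i ∈ range K, S (i + 2)) *
          K.factorial * hookProd α * ((d + 1) * (K + 1))) :=
      Nat.mul_lt_mul_of_pos_right (shiftedRowProd_succ_mul_lt hQ α (by omega)) hC
    _ = _ := by ring

theorem stmt_14_general (m q k : ℕ) (α : List ℕ) (hk : 1 ≤ k)
    (hq : 2 ≤ q) (hmq : q ≤ m)
    (hαq : ∀ x ∈ α, x < q) :
    (hookProd ((m + 1) :: (List.replicate (k - 1) q ++ [q - 1] ++ α)) : ℚ) /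
        hookProd (m :: (List.replicate k q ++ α)) <
      ((m : ℚ) - q + 1) / k := by
  obtain ⟨Q, rfl⟩ : ∃ Q, q = Q + 1 := ⟨q - 1, by omega⟩
  obtain ⟨K, rfl⟩ : ∃ K, k = K + 1 := ⟨k - 1, by omega⟩
  obtain ⟨d, rfl⟩ : ∃ d, m = Q + 1 + d := ⟨m - (Q + 1), by omega⟩
  have key := hookProd_mu_mul_lt (by omega) d K fun y hy => Nat.le_of_lt_succ (hαq y hy)
  rw [Nat.add_sub_cancel, Nat.add_sub_cancel, List.append_assoc, List.singleton_append,
    div_lt_div_iff₀ (by exact_mod_cast hookProd_pos _) (by positivity)]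
  have hshift : ((Q + 1 + d : ℕ) : ℚ) - ((Q + 1 : ℕ) : ℚ) + 1 = ((d + 1 : ℕ) : ℚ) := by
    push_cast
    ring
  rw [hshift]
  exact_mod_cast key

theorem stmt_14 (n m q k : ℕ) (α : List ℕ) (hn : 2 ≤ n) (hk : 1 ≤ k)
    (hq : 2 ≤ q) (hmq : q ≤ m)
    (hα : α.Pairwise (· ≥ ·)) (hαpos : ∀ x ∈ α, 0 < x) (hαq : ∀ x ∈ α, x < q)
    (hsum : m + k * q + α.sum = n) :
    (hookProd ((m + 1) :: (List.replicate (k - 1) q ++ [q - 1] ++ α)) : ℚ) /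
        hookProd (m :: (List.replicate k q ++ α)) <
      ((m : ℚ) - q + 1) / k :=
  stmt_14_general m q k α hk hq hmq hαq
end
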